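/- arXiv:1406.7868 — 2 statements merged into one kernel-verified Lean document; each statement's English description precedes it below -/
import Mathlib

section
/- Let X be a pointed metric space. The evaluation map f ↦ T_f, where T_f(φ) = φ(f) for φ ∈ F(X), is a topological isomorphism from (Lip₀(X), τ_γ) onto F(X)'_c, the dual of the Banach space F(X) endowed with the topology of uniform convergence on the convex balanced compact subsets of F(X). -/
open Filter Topology Set Pointwise

set_option linter.unusedSectionVars false
set_option linter.unusedVariables false

noncomputable section

namespace LipApprox

variable (X : Type*) [MetricSpace X] (x₀ : X)
variable (F : Type*) [NormedAddCommGroup F] [NormedSpace ℝ F]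

/-- The Lipschitz maps `X → F` vanishing at the base point, as a submodule of `X → F`. -/
def lip0Submodule : Submodule ℝ (X → F) where
  carrier := {f | (∃ K, LipschitzWith K f) ∧ f x₀ = 0}
  add_mem' := by
    rintro f g ⟨⟨Kf, hf⟩, hf0⟩ ⟨⟨Kg, hg⟩, hg0⟩
    exact ⟨⟨Kf + Kg, hf.add hg⟩, by simp [hf0, hg0]⟩
  zero_mem' := ⟨⟨0, LipschitzWith.const 0⟩, rfl⟩
  smul_mem' := by
    rintro c f ⟨⟨K, hf⟩, hf0⟩
    exact ⟨⟨‖c‖₊ * K, (lipschitzWith_smul c).comp hf⟩, by simp [hf0]⟩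

/-- The space `Lip₀(X, F)` of Lipschitz maps from `X` to `F` vanishing at the base point. -/
def lip0 : Type _ := ↥(lip0Submodule X x₀ F)

instance : AddCommGroup (lip0 X x₀ F) :=
  inferInstanceAs (AddCommGroup ↥(lip0Submodule X x₀ F))

instance : Module ℝ (lip0 X x₀ F) :=
  inferInstanceAs (Module ℝ ↥(lip0Submodule X x₀ F))

variable {X x₀ F}

/-- The underlying function of an element of `Lip₀(X, F)`. -/
def toFun' (f : lip0 X x₀ F) : X → F := f.1

lemma exists_lip (f : lip0 X x₀ F) : ∃ K, LipschitzWith K (toFun' f) := f.2.1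

lemma apply_base (f : lip0 X x₀ F) : toFun' f x₀ = 0 := f.2.2

lemma toFun'_add (f g : lip0 X x₀ F) : toFun' (f + g) = toFun' f + toFun' g := rfl
lemma toFun'_neg (f : lip0 X x₀ F) : toFun' (-f) = -toFun' f := rfl
lemma toFun'_smul (c : ℝ) (f : lip0 X x₀ F) : toFun' (c • f) = c • toFun' f := rfl
lemma toFun'_zero : toFun' (0 : lip0 X x₀ F) = 0 := rfl

variable (X x₀ F) in
/-- The Lipschitz norm of an element of `Lip₀(X, F)`. -/
def lipNorm (f : lip0 X x₀ F) : ℝ :=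
  ⨆ p : X × X, ‖toFun' f p.1 - toFun' f p.2‖ / dist p.1 p.2

lemma ratio_le (f : lip0 X x₀ F) {K : NNReal} (hK : LipschitzWith K (toFun' f))
    (p : X × X) : ‖toFun' f p.1 - toFun' f p.2‖ / dist p.1 p.2 ≤ K := by
  rcases eq_or_ne p.1 p.2 with h | h
  · simp [h]
  · rw [div_le_iff₀ (dist_pos.2 h), ← dist_eq_norm]
    exact hK.dist_le_mul p.1 p.2

lemma bddAbove_ratio (f : lip0 X x₀ F) :
    BddAbove (Set.range fun p : X × X =>
      ‖toFun' f p.1 - toFun' f p.2‖ / dist p.1 p.2) := by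
  obtain ⟨K, hK⟩ := exists_lip f
  exact ⟨K, by rintro r ⟨p, rfl⟩; exact ratio_le f hK p⟩

lemma nonempty_pairs (x₀ : X) : Nonempty (X × X) := ⟨(x₀, x₀)⟩

lemma ratio_le_lipNorm (f : lip0 X x₀ F) (p : X × X) :
    ‖toFun' f p.1 - toFun' f p.2‖ / dist p.1 p.2 ≤ lipNorm X x₀ F f :=
  le_ciSup (bddAbove_ratio f) p

lemma lipNorm_nonneg (f : lip0 X x₀ F) : 0 ≤ lipNorm X x₀ F f := by
  have := ratio_le_lipNorm (x₀ := x₀) f (x₀, x₀)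
  simpa using this

lemma norm_sub_le_lipNorm (f : lip0 X x₀ F) (x y : X) :
    ‖toFun' f x - toFun' f y‖ ≤ lipNorm X x₀ F f * dist x y := by
  rcases eq_or_ne x y with rfl | h
  · simp
  · have := ratio_le_lipNorm (x₀ := x₀) f (x, y)
    rw [div_le_iff₀ (dist_pos.2 h)] at this
    simpa using this

instance : NormedAddCommGroup (lip0 X x₀ F) :=
  AddGroupNorm.toNormedAddCommGroup
    { toFun := lipNorm X x₀ F
      map_zero' := by
        haveI : Nonempty (X × X) := nonempty_pairs x₀
        have h0 : ∀ p : X × X,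
            ‖toFun' (0 : lip0 X x₀ F) p.1 - toFun' (0 : lip0 X x₀ F) p.2‖ /
              dist p.1 p.2 = 0 := by
          intro p; rw [toFun'_zero]; simp
        simp only [lipNorm, h0, ciSup_const]
      add_le' := by
        intro f g
        haveI : Nonempty (X × X) := nonempty_pairs x₀
        apply ciSup_le
        intro p
        rcases eq_or_ne p.1 p.2 with h | h
        · simp only [h, dist_self, div_zero]
          exact add_nonneg (lipNorm_nonneg f) (lipNorm_nonneg g)
        · have hnum : ‖toFun' (f + g) p.1 - toFun' (f + g) p.2‖ ≤
              ‖toFun' f p.1 - toFun' f p.2‖ + ‖toFun' g p.1 - toFun' g p.2‖ := by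
            rw [toFun'_add, Pi.add_apply, Pi.add_apply, add_sub_add_comm]
            exact norm_add_le _ _
          calc ‖toFun' (f + g) p.1 - toFun' (f + g) p.2‖ / dist p.1 p.2
              ≤ (‖toFun' f p.1 - toFun' f p.2‖ +
                  ‖toFun' g p.1 - toFun' g p.2‖) / dist p.1 p.2 := by gcongr
            _ = ‖toFun' f p.1 - toFun' f p.2‖ / dist p.1 p.2 +
                  ‖toFun' g p.1 - toFun' g p.2‖ / dist p.1 p.2 := add_div _ _ _
            _ ≤ lipNorm X x₀ F f + lipNorm X x₀ F g :=
                add_le_add (ratio_le_lipNorm f p) (ratio_le_lipNorm g p)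
      neg' := by
        intro f
        simp only [lipNorm]
        congr 1
        funext p
        congr 1
        rw [toFun'_neg, Pi.neg_apply, Pi.neg_apply, neg_sub_neg, norm_sub_rev]
      eq_zero_of_map_eq_zero' := by
        intro f hf
        have hzero : ∀ x : X, toFun' f x = 0 := by
          intro x
          rcases eq_or_ne x x₀ with h | h
          · rw [h]; exact apply_base f
          · have hf' : lipNorm X x₀ F f = 0 := hf
            have h1 := ratio_le_lipNorm (x₀ := x₀) f (x, x₀)
            rw [hf', div_le_iff₀ (dist_pos.2 h), zero_mul] at h1
            have h2 : toFun' f x - toFun' f x₀ = 0 := by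
              simpa using norm_le_zero_iff.1 h1
            have h3 := apply_base f
            rw [h3, sub_zero] at h2
            exact h2
        exact Subtype.ext (funext hzero) }

lemma lip0_norm_def (f : lip0 X x₀ F) : ‖f‖ = lipNorm X x₀ F f := rfl

instance : NormedSpace ℝ (lip0 X x₀ F) where
  norm_smul_le c f := by
    haveI : Nonempty (X × X) := nonempty_pairs x₀
    rw [lip0_norm_def, lip0_norm_def, lipNorm]
    apply ciSup_le
    intro p
    have h1 : toFun' (c • f) p.1 - toFun' (c • f) p.2 =
        c • (toFun' f p.1 - toFun' f p.2) := by
      rw [toFun'_smul, Pi.smul_apply, Pi.smul_apply, smul_sub]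
    rw [h1, norm_smul]
    rcases eq_or_ne p.1 p.2 with h | h
    · simp only [h, dist_self, div_zero]
      exact mul_nonneg (norm_nonneg c) (lipNorm_nonneg f)
    · rw [mul_div_assoc]
      exact mul_le_mul_of_nonneg_left (ratio_le_lipNorm (x₀ := x₀) f p) (norm_nonneg c)

variable (X x₀ F)

/-- Elements of `Lip₀(X, F)` as continuous maps. -/
def toCM (f : lip0 X x₀ F) : C(X, F) :=
  ⟨toFun' f, by
    obtain ⟨K, hK⟩ := exists_lip f
    exact hK.continuous⟩

/-- The compact-open topology `τ₀` on `Lip₀(X, F)`. -/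
def tau0 : TopologicalSpace (lip0 X x₀ F) :=
  TopologicalSpace.induced (toCM X x₀ F) ContinuousMap.compactOpen

/-- The set `γ(U) = ⋃ₙ (U₀ ∩ B + U₁ ∩ 2B + ⋯ + Uₙ ∩ 2ⁿB)` from the definition of the
mixed topology, where `B` is the closed unit ball of `Lip₀(X, F)`. -/
def gammaSet (U : ℕ → Set (lip0 X x₀ F)) : Set (lip0 X x₀ F) :=
  ⋃ n : ℕ, ∑ i ∈ Finset.range (n + 1), (U i ∩ {f | ‖f‖ ≤ 2 ^ i})

/-- The mixed topology `τ_γ = γ[Lip, τ₀]` on `Lip₀(X, F)`: the topology whose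
neighborhoods of a point `f` are generated by the translates by `f` of the sets `γ(U)`,
where `U` runs over all sequences of convex balanced `τ₀`-neighborhoods of zero. -/
def tauGamma : TopologicalSpace (lip0 X x₀ F) :=
  TopologicalSpace.mkOfNhds fun f =>
    ⨅ (U : ℕ → Set (lip0 X x₀ F))
      (_ : ∀ n, U n ∈ @nhds _ (tau0 X x₀ F) 0 ∧ Convex ℝ (U n) ∧ Balanced ℝ (U n)),
      Filter.principal ((f + ·) '' gammaSet X x₀ F U)

/-- A subset of `Lip₀(X, F)` is norm bounded if the Lipschitz norms of its members are
uniformly bounded. -/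
def NormBounded (B : Set (lip0 X x₀ F)) : Prop :=
  ∃ C : ℝ, ∀ f ∈ B, ‖f‖ ≤ C

/-- The locally convex topology `γτ_γ` on `Lip₀(X, F)`, generated by the seminorms
`f ↦ sup_n αₙ ‖f xₙ - f yₙ‖ / d(xₙ, yₙ)` where `(αₙ)` is a sequence of positive reals
tending to zero and `((xₙ, yₙ))` is a sequence of pairs of distinct points of `X`. -/
def gammaTauGamma : TopologicalSpace (lip0 X x₀ F) :=
  ⨅ (α : ℕ → ℝ) (z : ℕ → X × X)
    (_ : (∀ n, 0 < α n) ∧ Filter.Tendsto α Filter.atTop (nhds 0) ∧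
      ∀ n, (z n).1 ≠ (z n).2),
    TopologicalSpace.induced
      (fun f => UniformFun.ofFun fun n =>
        (α n / dist (z n).1 (z n).2) • (toFun' f (z n).1 - toFun' f (z n).2))
      inferInstance

/-- Evaluation at a point of `X`, as a linear functional on `Lip₀(X)`. -/
def evalLM (x : X) : lip0 X x₀ ℝ →ₗ[ℝ] ℝ where
  toFun f := toFun' f x
  map_add' f g := rfl
  map_smul' c f := rfl

/-- Evaluation at a point of `X`, as a continuous linear functional on `Lip₀(X)`. -/
def evalCLM (x : X) : lip0 X x₀ ℝ →L[ℝ] ℝ :=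
  LinearMap.mkContinuous (evalLM X x₀ x) (dist x x₀)
    (fun f => by
      have h0 : toFun' f x₀ = 0 := apply_base f
      have h := norm_sub_le_lipNorm (x₀ := x₀) f x x₀
      rw [h0, sub_zero] at h
      calc ‖evalLM X x₀ x f‖ ≤ lipNorm X x₀ ℝ f * dist x x₀ := h
        _ = dist x x₀ * ‖f‖ := by rw [lip0_norm_def, mul_comm])

/-- The Lipschitz-free space `F(X)`: the closed linear span of the evaluation
functionals inside the dual of `Lip₀(X)`. -/
def freeSpace : Submodule ℝ (lip0 X x₀ ℝ →L[ℝ] ℝ) :=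
  (Submodule.span ℝ (Set.range (evalCLM X x₀))).topologicalClosure

/-- The Dirac map `δ : X → F(X)`. -/
def deltaF (x : X) : freeSpace X x₀ :=
  ⟨evalCLM X x₀ x,
    Submodule.le_topologicalClosure _ (Submodule.subset_span (Set.mem_range_self x))⟩

/-- For a normed space `G`, the topology on the dual `G'` of uniform convergence on the
convex balanced compact subsets of `G` (the topology of `G'_c`). -/
def dualcTop (G : Type*) [NormedAddCommGroup G] [NormedSpace ℝ G] :
    TopologicalSpace (G →L[ℝ] ℝ) :=
  TopologicalSpace.induced
    (fun φ => UniformOnFun.ofFun {L : Set G | IsCompact L ∧ Convex ℝ L ∧ Balanced ℝ L} ⇑φ)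
    inferInstance

/-!
A functional `T` on `F(X)` is represented by the Lipschitz function `x ↦ T δₓ`, since the
`δₓ` span a dense subspace of `F(X)`; so evaluation identifies `Lip₀(X)` with `F(X)'`.

Continuity of `f ↦ T_f`: a compact `L ⊆ F(X)` is uniformly approximated by finitely many elements
of the span of the `δₓ`, which are pointwise and hence `τ₀`-continuous. So on each ball `2ⁱB` some
`τ₀`-neighbourhood `Uᵢ` is mapped into a `2⁻ⁱε`-small set, and summing over `i` maps `γ(U)` into
the `ε`-neighbourhood of uniform convergence on `L`.

Continuity of the inverse is a Banach–Dieudonné argument. On norm balls `τ₀` agrees with pointwise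
convergence, so `Uᵢ ∩ 2ⁱB` contains `Vᵢ ∩ 2ⁱB` for a pointwise neighbourhood `Vᵢ`, and the balls
are pointwise compact. This compactness yields, inductively, finite sets `Cₙ` of elements of the
span of the `δₓ`, the new ones of norm at most `2⁻ⁿ`, with
`Cₙ° ∩ 2ⁿB ⊆ V₀ ∩ B + ⋯ + V₂ₙ ∩ 2²ⁿB`. The union of the `Cₙ` is totally bounded, so its closed
absolutely convex hull `L` is a compact convex balanced subset of `F(X)` with `L° ⊆ γ(U)`.
-/

section LipschitzNorm

variable {X x₀ F}

lemma norm_sub_le_norm_mul_dist (f : lip0 X x₀ F) (x y : X) :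
    ‖toFun' f x - toFun' f y‖ ≤ ‖f‖ * dist x y :=
  norm_sub_le_lipNorm f x y

lemma norm_apply_le (f : lip0 X x₀ F) (x : X) : ‖toFun' f x‖ ≤ ‖f‖ * dist x x₀ := by
  simpa [apply_base] using norm_sub_le_norm_mul_dist f x x₀

lemma norm_le_bound {f : lip0 X x₀ F} {r : ℝ} (hr : 0 ≤ r)
    (h : ∀ x y, ‖toFun' f x - toFun' f y‖ ≤ r * dist x y) : ‖f‖ ≤ r := by
  have : Nonempty (X × X) := ⟨(x₀, x₀)⟩
  refine ciSup_le fun p => ?_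
  rcases eq_or_ne p.1 p.2 with hp | hp
  · simp [hp, hr]
  · exact (div_le_iff₀ (dist_pos.2 hp)).2 (h p.1 p.2)

lemma norm_le_iff {f : lip0 X x₀ F} {r : ℝ} (hr : 0 ≤ r) :
    ‖f‖ ≤ r ↔ ∀ x y, ‖toFun' f x - toFun' f y‖ ≤ r * dist x y :=
  ⟨fun hf x y => (norm_sub_le_norm_mul_dist f x y).trans (by gcongr), norm_le_bound hr⟩

end LipschitzNorm

abbrev pointwiseTopology : TopologicalSpace (lip0 X x₀ F) :=
  .induced toFun' inferInstance

section Pointwise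

variable {X x₀ F}

lemma continuous_apply_pointwise (x : X) :
    Continuous[pointwiseTopology X x₀ F, _] fun f => toFun' f x := by
  let := pointwiseTopology X x₀ F
  exact (continuous_apply x).comp continuous_induced_dom

lemma isOpen_add_pointwise {A T : Set (lip0 X x₀ F)} (hT : IsOpen[pointwiseTopology X x₀ F] T) :
    IsOpen[pointwiseTopology X x₀ F] (A + T) := by
  let := pointwiseTopology X x₀ F
  have hcont (a : lip0 X x₀ F) : Continuous (-a + ·) :=
    continuous_induced_rng.2 <| continuous_const.add continuous_induced_dom
  rw [← iUnion_add_left_image]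
  exact isOpen_biUnion fun a _ => by
    simpa [image_add_left] using (hcont a).isOpen_preimage T hT

lemma tau0_le_pointwiseTopology : tau0 X x₀ F ≤ pointwiseTopology X x₀ F := by
  let := tau0 X x₀ F
  have h : Continuous[tau0 X x₀ F, ContinuousMap.compactOpen] (toCM X x₀ F) :=
    continuous_induced_dom
  exact continuous_iff_le_induced.1 ((continuous_coeFun (F := C(X, F))).comp h)

lemma isCompact_closedBall_pointwise [ProperSpace F] {r : ℝ} (hr : 0 ≤ r) :
    @IsCompact _ (pointwiseTopology X x₀ F) {f : lip0 X x₀ F | ‖f‖ ≤ r} := by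
  let := pointwiseTopology X x₀ F
  set A : Set (X → F) := {g | g x₀ = 0 ∧ ∀ x y, ‖g x - g y‖ ≤ r * dist x y}
  have himage : toFun' '' {f : lip0 X x₀ F | ‖f‖ ≤ r} = A := by
    refine Subset.antisymm ?_ fun g ⟨hg0, hg⟩ => ?_
    · rintro _ ⟨f, hf, rfl⟩
      exact ⟨apply_base f, (norm_le_iff hr).1 hf⟩
    · have hlip : LipschitzWith r.toNNReal g := .of_dist_le_mul fun x y => by
        simpa [dist_eq_norm, Real.coe_toNNReal r hr] using hg x y
      exact ⟨⟨g, ⟨_, hlip⟩, hg0⟩, (norm_le_iff hr).2 hg, rfl⟩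
  have hA : IsCompact A := by
    refine (isCompact_univ_pi fun x => isCompact_closedBall (0 : F) (r * dist x x₀))
      |>.of_isClosed_subset ?_ fun g ⟨hg0, hg⟩ x _ => ?_
    · have hAeq : A = {g | g x₀ = 0} ∩ ⋂ (x) (y), {g : X → F | ‖g x - g y‖ ≤ r * dist x y} := by
        ext; simp [A]
      rw [hAeq]
      refine (isClosed_eq (continuous_apply x₀) continuous_const).inter ?_
      exact isClosed_iInter fun x => isClosed_iInter fun y =>
        isClosed_le ((continuous_apply x).sub (continuous_apply y)).norm continuous_const
    · simpa [hg0] using hg x x₀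
  have hind : Topology.IsInducing (toFun' : lip0 X x₀ F → X → F) := ⟨rfl⟩
  rw [hind.isCompact_iff, himage]
  exact hA

end Pointwise

section PointwiseBall

variable {X x₀ F}

lemma le_pointwiseTopology :
    (inferInstance : TopologicalSpace (lip0 X x₀ F)) ≤ pointwiseTopology X x₀ F := by
  refine continuous_iff_le_induced.1 <| continuous_pi fun x => ?_
  refine LipschitzWith.continuous (K := nndist x x₀) <| .of_dist_le_mul fun g h => ?_
  rw [dist_eq_norm, dist_eq_norm, coe_nndist, mul_comm]
  exact norm_apply_le (g - h) x

def pointwiseBall (D : Finset X) (η : ℝ) : Set (lip0 X x₀ F) :=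
  {g | ∀ x ∈ D, ‖toFun' g x‖ < η}

lemma isOpen_pointwiseBall (D : Finset X) (η : ℝ) :
    IsOpen[pointwiseTopology X x₀ F] (pointwiseBall D η) := by
  let := pointwiseTopology X x₀ F
  have : pointwiseBall D η = ⋂ x ∈ D, {g : lip0 X x₀ F | ‖toFun' g x‖ < η} := by
    ext; simp [pointwiseBall]
  rw [this]
  exact isOpen_biInter_finset fun x _ =>
    isOpen_lt (continuous_apply_pointwise x).norm continuous_const

lemma zero_mem_pointwiseBall (D : Finset X) {η : ℝ} (hη : 0 < η) :
    (0 : lip0 X x₀ F) ∈ pointwiseBall D η := fun x _ => by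
  simpa [toFun'_zero] using hη

lemma pointwiseBall_mem_nhds_zero (D : Finset X) {η : ℝ} (hη : 0 < η) :
    pointwiseBall D η ∈ 𝓝 (0 : lip0 X x₀ F) :=
  (le_pointwiseTopology _ (isOpen_pointwiseBall D η)).mem_nhds (zero_mem_pointwiseBall D hη)

lemma balanced_pointwiseBall (D : Finset X) (η : ℝ) :
    Balanced ℝ (pointwiseBall (x₀ := x₀) (F := F) D η) := by
  rintro a ha _ ⟨g, hg, rfl⟩ x hx
  rw [toFun'_smul, Pi.smul_apply, norm_smul]
  exact (mul_le_of_le_one_left (norm_nonneg _) (by simpa using ha)).trans_lt (hg x hx)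

lemma pointwiseBall_anti {D D' : Finset X} {η η' : ℝ} (hD : D ⊆ D') (hη : η' ≤ η) :
    pointwiseBall (x₀ := x₀) (F := F) D' η' ⊆ pointwiseBall D η :=
  fun _ hg x hx => (hg x (hD hx)).trans_le hη

/-- Norm balls are equicontinuous, so on them `τ₀` is no finer than the pointwise topology. -/
lemma exists_pointwiseBall_inter_subset {U : Set (lip0 X x₀ F)}
    (hU : U ∈ @nhds _ (tau0 X x₀ F) 0) {c : ℝ} (hc : 0 < c) :
    ∃ (D : Finset X) (η : ℝ), 0 < η ∧ pointwiseBall D η ∩ {g | ‖g‖ ≤ c} ⊆ U := by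
  rw [tau0, nhds_induced] at hU
  obtain ⟨W, hW, hWU⟩ := hU
  obtain ⟨⟨K, V⟩, ⟨hK, hV⟩, hsub⟩ := (nhds_basis_uniformity' (x := toCM X x₀ F 0)
    (ContinuousMap.hasBasis_compactConvergenceUniformity (α := X) (β := F))).mem_iff.1 hW
  obtain ⟨ε, hε, hεV⟩ := Metric.mem_uniformity_dist.1 hV
  obtain ⟨t, -, htfin, htcov⟩ := finite_cover_balls_of_compact hK (by positivity : 0 < ε / 2 / c)
  refine ⟨htfin.toFinset, ε / 2, by positivity, fun g ⟨hgD, hgc⟩ => hWU <| hsub fun y hy => ?_⟩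
  obtain ⟨x, hxt, hxy⟩ := mem_iUnion₂.1 (htcov hy)
  apply hεV
  have hgy : ‖toFun' g y‖ < ε := calc
    ‖toFun' g y‖ ≤ ‖toFun' g y - toFun' g x‖ + ‖toFun' g x‖ := norm_le_norm_sub_add _ _
    _ < c * (ε / 2 / c) + ε / 2 := by
      gcongr
      · exact ((norm_le_iff hc.le).1 hgc y x).trans_lt (by gcongr; exact Metric.mem_ball.1 hxy)
      · exact hgD x (htfin.mem_toFinset.2 hxt)
    _ = ε := by field_simp; ring
  simpa [toCM, toFun'_zero, dist_eq_norm, norm_sub_rev] using hgy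

end PointwiseBall

section MixedTopology

variable {X x₀ F}

/-- The sequences `U` for which the sets `f + γ(U)` are the basic `τ_γ`-neighbourhoods of `f`. -/
def IsAdmissible (U : ℕ → Set (lip0 X x₀ F)) : Prop :=
  ∀ n, U n ∈ @nhds _ (tau0 X x₀ F) 0 ∧ Convex ℝ (U n) ∧ Balanced ℝ (U n)

lemma IsAdmissible.inter {U V : ℕ → Set (lip0 X x₀ F)} (hU : IsAdmissible U)
    (hV : IsAdmissible V) : IsAdmissible fun n => U n ∩ V n := fun n =>
  ⟨Filter.inter_mem (hU n).1 (hV n).1, (hU n).2.1.inter (hV n).2.1, (hU n).2.2.inter (hV n).2.2⟩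

lemma gammaSet_mono {U V : ℕ → Set (lip0 X x₀ F)} (h : ∀ n, V n ⊆ U n) :
    gammaSet X x₀ F V ⊆ gammaSet X x₀ F U :=
  iUnion_mono fun _ => finsetSum_subset_finsetSum _ _ _ fun i _ => inter_subset_inter_left _ (h i)

lemma isOpen_tauGamma_iff {s : Set (lip0 X x₀ F)} :
    IsOpen[tauGamma X x₀ F] s ↔
      ∀ f ∈ s, ∃ U, IsAdmissible U ∧ (f + ·) '' gammaSet X x₀ F U ⊆ s := by
  refine forall₂_congr fun f _ => (hasBasis_biInf_principal ?_ ?_).mem_iff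
  · rintro U hU V hV
    exact ⟨_, IsAdmissible.inter hU hV, image_mono (gammaSet_mono fun _ => inter_subset_left),
      image_mono (gammaSet_mono fun _ => inter_subset_right)⟩
  · exact ⟨fun _ => univ, fun _ => ⟨Filter.univ_mem, convex_univ, balanced_univ⟩⟩

lemma exists_pointwiseBall_seq {U : ℕ → Set (lip0 X x₀ F)} (hU : IsAdmissible U) :
    ∃ (D : ℕ → Finset X) (η : ℕ → ℝ), Monotone D ∧ Antitone η ∧ (∀ i, 0 < η i) ∧
      ∀ i, pointwiseBall (D i) (η i) ∩ {g | ‖g‖ ≤ 2 ^ i} ⊆ U i := by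
  classical
  choose D η hη hDη using fun i => exists_pointwiseBall_inter_subset (hU i).1
    (by positivity : (0 : ℝ) < 2 ^ i)
  refine ⟨fun i => (Finset.range (i + 1)).biUnion D,
    fun i => (Finset.range (i + 1)).inf' Finset.nonempty_range_add_one η,
    fun i j hij => Finset.biUnion_subset_biUnion_of_subset_left _ (by gcongr),
    fun i j hij => Finset.inf'_mono _ (by gcongr) _,
    fun i => (Finset.lt_inf'_iff _).2 fun j _ => hη j, fun i => ?_⟩
  refine (inter_subset_inter_left _ (pointwiseBall_anti ?_ ?_)).trans (hDη i)
  · exact Finset.subset_biUnion_of_mem D (Finset.self_mem_range_succ i)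
  · exact Finset.inf'_le _ (Finset.self_mem_range_succ i)

end MixedTopology

section GammaSum

variable {E : Type*} [SeminormedAddCommGroup E] [NormedSpace ℝ E]

def gammaSum (V : ℕ → Set E) (m : ℕ) : Set E :=
  ∑ i ∈ Finset.range (m + 1), (V i ∩ {f | ‖f‖ ≤ 2 ^ i})

variable {X x₀ F} in
lemma gammaSet_eq_iUnion_gammaSum (U : ℕ → Set (lip0 X x₀ F)) :
    gammaSet X x₀ F U = ⋃ m, gammaSum U m := rfl

lemma norm_le_of_mem_gammaSum {V : ℕ → Set E} {m : ℕ} {g : E} (hg : g ∈ gammaSum V m) :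
    ‖g‖ ≤ 2 ^ (m + 1) := by
  obtain ⟨g, hgi, rfl⟩ := (mem_finsetSum _ _ _).1 hg
  calc ‖∑ i ∈ Finset.range (m + 1), g i‖
      ≤ ∑ i ∈ Finset.range (m + 1), ‖g i‖ := norm_sum_le _ _
    _ ≤ ∑ i ∈ Finset.range (m + 1), (2 : ℝ) ^ i := Finset.sum_le_sum fun i hi => (hgi hi).2
    _ ≤ 2 ^ (m + 1) := by rw [geom_sum_eq (by norm_num)]; norm_num

lemma exists_smul_add_smul_of_norm_le (v : E) {a b : ℝ} (ha : 0 ≤ a) (hb : 0 ≤ b)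
    (hv : ‖v‖ ≤ a + b) :
    ∃ s t : ℝ, 0 ≤ s ∧ 0 ≤ t ∧ s + t = 1 ∧ ‖s • v‖ ≤ a ∧ ‖t • v‖ ≤ b := by
  by_cases hva : ‖v‖ ≤ a
  · exact ⟨1, 0, zero_le_one, le_rfl, add_zero 1, by simpa using hva, by simpa using hb⟩
  have hv0 : 0 < ‖v‖ := ha.trans_lt (not_le.1 hva)
  have ht : 0 ≤ 1 - a / ‖v‖ := by rw [sub_nonneg, div_le_one hv0]; exact (not_le.1 hva).le
  refine ⟨a / ‖v‖, 1 - a / ‖v‖, by positivity, ht, by ring, ?_, ?_⟩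
  · rw [norm_smul, Real.norm_of_nonneg (by positivity), div_mul_cancel₀ _ hv0.ne']
  · rw [norm_smul, Real.norm_of_nonneg ht, sub_mul, one_mul, div_mul_cancel₀ _ hv0.ne']
    linarith

/-- Split `h - f` between the last two summands. -/
lemma mem_gammaSum_add_two {V : ℕ → Set E} (hV : Antitone V) (hbal : ∀ i, Balanced ℝ (V i))
    {m : ℕ} {f h : E} (hf : f ∈ gammaSum V m) (hh : ‖h‖ ≤ 2 ^ (m + 2))
    (hhf : h - f ∈ V (m + 2)) : h ∈ gammaSum V (m + 2) := by
  have hsplit : ‖h - f‖ ≤ 2 ^ (m + 1) + 2 ^ (m + 2) := by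
    linarith [norm_sub_le h f, norm_le_of_mem_gammaSum hf]
  obtain ⟨s, t, hs, ht, hst, hsv, htv⟩ :=
    exists_smul_add_smul_of_norm_le (h - f) (by positivity) (by positivity) hsplit
  have hmem {k : ℕ} {c : ℝ} (hk : k ≤ m + 2) (hc : 0 ≤ c) (hc1 : c ≤ 1) : c • (h - f) ∈ V k :=
    (hbal k).smul_mem (by rwa [Real.norm_of_nonneg hc]) (hV hk hhf)
  have hdecomp : h = f + s • (h - f) + t • (h - f) := by
    rw [add_assoc, ← add_smul, hst, one_smul, add_sub_cancel]
  rw [hdecomp, gammaSum, Finset.sum_range_succ, Finset.sum_range_succ]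
  exact add_mem_add (add_mem_add hf ⟨hmem (by omega) hs (by linarith), hsv⟩)
    ⟨hmem le_rfl ht (by linarith), htv⟩

end GammaSum

lemma _root_.IsCompact.exists_finset_ball_cover_of_subset_closure {E : Type*}
    [PseudoMetricSpace E] {L s : Set E} (hL : IsCompact L) (hLs : L ⊆ closure s) {δ : ℝ}
    (hδ : 0 < δ) :
    ∃ t : Finset s, L ⊆ ⋃ ν ∈ t, Metric.ball (ν : E) δ :=
  hL.elim_finite_subcover _ (fun _ => Metric.isOpen_ball) fun φ hφ => by
    obtain ⟨ν, hν, hd⟩ := Metric.mem_closure_iff.1 (hLs hφ) δ hδ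
    exact mem_iUnion.2 ⟨⟨ν, hν⟩, Metric.mem_ball.2 hd⟩

lemma totallyBounded_iUnion_of_subset_union_closedBall {E : Type*} [SeminormedAddCommGroup E]
    {C : ℕ → Set E} (hfin : ∀ n, (C n).Finite) (hmono : Monotone C) {ε : ℕ → ℝ}
    (hε : Antitone ε) (hε0 : Tendsto ε atTop (𝓝 0))
    (hsucc : ∀ n, C (n + 1) ⊆ C n ∪ Metric.closedBall 0 (ε n)) :
    TotallyBounded (⋃ n, C n) := by
  have htail (N m : ℕ) : C m ⊆ C N ∪ Metric.closedBall 0 (ε N) := by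
    induction m with
    | zero => exact (hmono (Nat.zero_le N)).trans subset_union_left
    | succ m ih =>
      rcases le_or_gt (m + 1) N with h | h
      · exact (hmono h).trans subset_union_left
      · exact (hsucc m).trans <| union_subset ih <|
          (Metric.closedBall_subset_closedBall (hε (by omega))).trans subset_union_right
  refine Metric.totallyBounded_iff.2 fun δ hδ => ?_
  obtain ⟨N, hN⟩ := (hε0.eventually (gt_mem_nhds hδ)).exists
  refine ⟨C N ∪ {0}, (hfin N).union (finite_singleton 0), iUnion_subset fun m x hx => ?_⟩
  rcases htail N m hx with h | h
  · exact mem_biUnion (mem_union_left _ h) (Metric.mem_ball_self hδ)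
  · exact mem_biUnion (mem_union_right _ rfl) ((Metric.closedBall_subset_ball hN) h)

section DiracSpan

variable {X x₀ F}

variable (X x₀) in
abbrev diracSpan : Submodule ℝ (lip0 X x₀ ℝ →L[ℝ] ℝ) :=
  Submodule.span ℝ (range (evalCLM X x₀))

lemma evalCLM_apply (x : X) (f : lip0 X x₀ ℝ) : evalCLM X x₀ x f = toFun' f x := rfl

lemma norm_evalCLM_sub_le (x y : X) : ‖evalCLM X x₀ x - evalCLM X x₀ y‖ ≤ dist x y :=
  ContinuousLinearMap.opNorm_le_bound _ dist_nonneg fun f => by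
    simpa [evalCLM_apply, mul_comm] using norm_sub_le_norm_mul_dist f x y

lemma continuous_pointwise_of_mem_span {μ : lip0 X x₀ ℝ →L[ℝ] ℝ}
    (hμ : μ ∈ diracSpan X x₀) :
    Continuous[pointwiseTopology X x₀ ℝ, _] μ := by
  let := pointwiseTopology X x₀ ℝ
  induction hμ using Submodule.span_induction with
  | mem ν hν =>
    obtain ⟨x, rfl⟩ := hν
    exact continuous_apply_pointwise x
  | zero => exact continuous_const
  | add ν₁ ν₂ _ _ h₁ h₂ => exact h₁.add h₂
  | smul c ν _ h => exact continuous_const.mul h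

/-- The functionals `(r / d(x, y)) (δₓ - δ_y)` of the ball of radius `r` read off the Lipschitz
constant. -/
lemma norm_le_inv_of_forall_mem_span {f : lip0 X x₀ ℝ} {r : ℝ} (hr : 0 < r)
    (h : ∀ μ ∈ diracSpan X x₀, ‖μ‖ ≤ r → |μ f| ≤ 1) :
    ‖f‖ ≤ r⁻¹ := by
  refine norm_le_bound (by positivity) fun x y => ?_
  rcases eq_or_ne x y with rfl | hxy
  · simp
  have hd : 0 < dist x y := dist_pos.2 hxy
  set μ := (r / dist x y) • (evalCLM X x₀ x - evalCLM X x₀ y)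
  have hμ : μ ∈ diracSpan X x₀ :=
    Submodule.smul_mem _ _ (sub_mem (Submodule.subset_span (mem_range_self x))
      (Submodule.subset_span (mem_range_self y)))
  have hμr : ‖μ‖ ≤ r := calc
    ‖μ‖ ≤ r / dist x y * dist x y := by
      rw [norm_smul, Real.norm_of_nonneg (by positivity)]
      gcongr
      exact norm_evalCLM_sub_le x y
    _ = r := by field_simp
  have := h μ hμ hμr
  rw [show μ f = r / dist x y * (toFun' f x - toFun' f y) from rfl, abs_mul,
    abs_of_pos (by positivity), ← le_div_iff₀' (by positivity)] at this
  rw [Real.norm_eq_abs]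
  calc |toFun' f x - toFun' f y| ≤ 1 / (r / dist x y) := this
    _ = r⁻¹ * dist x y := by field_simp

/-- Compactness of norm balls in the pointwise topology turns the bipolar estimate
`norm_le_inv_of_forall_mem_span` into a statement about finitely many functionals. -/
lemma exists_finset_polar_subset {Q R : Set (lip0 X x₀ ℝ)}
    (hQ : IsClosed[pointwiseTopology X x₀ ℝ] Q) (hR : IsOpen[pointwiseTopology X x₀ ℝ] R)
    {r b : ℝ} (hr : 0 < r) (hb : 0 ≤ b) (hQR : ∀ f ∈ Q, ‖f‖ ≤ r⁻¹ → f ∈ R) :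
    ∃ C : Finset (lip0 X x₀ ℝ →L[ℝ] ℝ),
      (∀ μ ∈ C, μ ∈ diracSpan X x₀ ∧ ‖μ‖ ≤ r) ∧
      ∀ f ∈ Q, (∀ μ ∈ C, |μ f| ≤ 1) → ‖f‖ ≤ b → f ∈ R := by
  classical
  let M := {μ : lip0 X x₀ ℝ →L[ℝ] ℝ // μ ∈ diracSpan X x₀ ∧ ‖μ‖ ≤ r}
  let := pointwiseTopology X x₀ ℝ
  have hK : IsCompact (Q ∩ {f | ‖f‖ ≤ b} ∩ Rᶜ) :=
    ((isCompact_closedBall_pointwise hb).inter_left hQ).inter_right hR.isClosed_compl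
  have hclosed (μ : M) : IsClosed {f : lip0 X x₀ ℝ | |μ.1 f| ≤ 1} :=
    isClosed_le (continuous_pointwise_of_mem_span μ.2.1).abs continuous_const
  obtain ⟨u, hu⟩ := hK.elim_finite_subfamily_closed _ hclosed <| by
    refine eq_empty_of_forall_notMem fun f ⟨⟨⟨hfQ, _⟩, hfR⟩, hf⟩ => hfR <| hQR f hfQ ?_
    exact norm_le_inv_of_forall_mem_span hr fun μ hμ hμr => mem_iInter.1 hf ⟨μ, hμ, hμr⟩
  refine ⟨u.map (Function.Embedding.subtype _), fun μ hμ => ?_, fun f hfQ hfC hfb => ?_⟩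
  · obtain ⟨ν, -, rfl⟩ := Finset.mem_map.1 hμ
    exact ν.2
  · by_contra hfR
    refine (eq_empty_iff_forall_notMem.1 hu) f ⟨⟨⟨hfQ, hfb⟩, hfR⟩, mem_iInter₂.2 fun μ hμ => ?_⟩
    exact hfC μ.1 (Finset.mem_map_of_mem _ hμ)

lemma isClosed_polar_pointwise {C : Finset (lip0 X x₀ ℝ →L[ℝ] ℝ)}
    (hC : ∀ μ ∈ C, μ ∈ diracSpan X x₀) :
    IsClosed[pointwiseTopology X x₀ ℝ] {f | ∀ μ ∈ C, |μ f| ≤ 1} := by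
  let := pointwiseTopology X x₀ ℝ
  rw [show {f | ∀ μ ∈ C, |μ f| ≤ 1} = ⋂ μ ∈ C, {f : lip0 X x₀ ℝ | |μ f| ≤ 1} by ext; simp]
  exact isClosed_biInter fun μ hμ =>
    isClosed_le (continuous_pointwise_of_mem_span (hC μ hμ)).abs continuous_const

lemma exists_finset_polar_subset_gammaSum_zero {D : ℕ → Finset X} {η : ℕ → ℝ} (hη : 0 < η 0) :
    ∃ C : Finset (lip0 X x₀ ℝ →L[ℝ] ℝ), (∀ μ ∈ C, μ ∈ diracSpan X x₀) ∧
      {f | ∀ μ ∈ C, |μ f| ≤ 1} ∩ {f | ‖f‖ ≤ 2 ^ 0} ⊆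
        gammaSum (fun i => pointwiseBall (D i) (η i)) 0 := by
  obtain ⟨ε, hε, hball⟩ :=
    Metric.mem_nhds_iff.1 (pointwiseBall_mem_nhds_zero (x₀ := x₀) (F := ℝ) (D 0) hη)
  obtain ⟨C, hC, hCR⟩ := exists_finset_polar_subset (@isClosed_univ _ (pointwiseTopology X x₀ ℝ))
    (isOpen_pointwiseBall (D 0) (η 0)) (by positivity : 0 < 2 / ε) zero_le_one
    fun f _ hf => hball (mem_ball_zero_iff.2 (hf.trans_lt (by rw [inv_div]; linarith)))
  refine ⟨C, fun μ hμ => (hC μ hμ).1, fun f ⟨hfC, hf⟩ => ?_⟩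
  rw [gammaSum, Finset.sum_range_one]
  exact ⟨hCR f (mem_univ f) hfC (by simpa using hf), hf⟩

lemma exists_finset_polar_subset_gammaSum_succ {D : ℕ → Finset X} {η : ℕ → ℝ}
    (hD : Monotone D) (hη : Antitone η) (hη0 : ∀ i, 0 < η i) {n : ℕ}
    {C : Finset (lip0 X x₀ ℝ →L[ℝ] ℝ)}
    (hC : ∀ μ ∈ C, μ ∈ diracSpan X x₀)
    (hCS : {f | ∀ μ ∈ C, |μ f| ≤ 1} ∩ {f | ‖f‖ ≤ 2 ^ n} ⊆
      gammaSum (fun i => pointwiseBall (D i) (η i)) (2 * n)) :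
    ∃ C' : Finset (lip0 X x₀ ℝ →L[ℝ] ℝ),
      (∀ μ ∈ C', μ ∈ diracSpan X x₀ ∧ ‖μ‖ ≤ (2 ^ n)⁻¹) ∧
      {f | ∀ μ ∈ C, |μ f| ≤ 1} ∩ {f | ∀ μ ∈ C', |μ f| ≤ 1} ∩ {f | ‖f‖ ≤ 2 ^ (n + 1)} ⊆
        gammaSum (fun i => pointwiseBall (D i) (η i)) (2 * (n + 1)) := by
  set V : ℕ → Set (lip0 X x₀ ℝ) := fun i => pointwiseBall (D i) (η i)
  obtain ⟨C', hC', hC'R⟩ := exists_finset_polar_subset (isClosed_polar_pointwise hC)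
    (isOpen_add_pointwise (A := gammaSum V (2 * n)) (isOpen_pointwiseBall (D (2 * n + 2)) _))
    (by positivity : (0 : ℝ) < (2 ^ n)⁻¹) (by positivity : (0 : ℝ) ≤ 2 ^ (n + 1))
    fun f hfC hf =>
      ⟨f, hCS ⟨hfC, by simpa using hf⟩, 0, zero_mem_pointwiseBall _ (hη0 _), add_zero f⟩
  refine ⟨C', hC', fun f ⟨⟨hfC, hfC'⟩, hf⟩ => ?_⟩
  obtain ⟨a, ha, e, he, rfl⟩ := hC'R f hfC hfC' hf
  have hV : Antitone V := fun i j hij => pointwiseBall_anti (hD hij) (hη hij)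
  rw [mul_add, mul_one]
  refine mem_gammaSum_add_two hV (fun i => balanced_pointwiseBall _ _) ha ?_ (by simpa using he)
  exact hf.trans (pow_le_pow_right₀ one_le_two (by omega))

lemma exists_seq_finset_polar_subset_gammaSum {D : ℕ → Finset X} {η : ℕ → ℝ}
    (hD : Monotone D) (hη : Antitone η) (hη0 : ∀ i, 0 < η i) :
    ∃ C : ℕ → Finset (lip0 X x₀ ℝ →L[ℝ] ℝ), Monotone C ∧
      (∀ n, ∀ μ ∈ C n, μ ∈ diracSpan X x₀) ∧
      (∀ n, (C (n + 1) : Set (lip0 X x₀ ℝ →L[ℝ] ℝ)) ⊆ ↑(C n) ∪ Metric.closedBall 0 (2 ^ n)⁻¹) ∧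
      ∀ n, {f | ∀ μ ∈ C n, |μ f| ≤ 1} ∩ {f | ‖f‖ ≤ 2 ^ n} ⊆
        gammaSum (fun i => pointwiseBall (D i) (η i)) (2 * n) := by
  classical
  set P : ℕ → Finset (lip0 X x₀ ℝ →L[ℝ] ℝ) → Prop := fun n C =>
    (∀ μ ∈ C, μ ∈ diracSpan X x₀) ∧
      {f | ∀ μ ∈ C, |μ f| ≤ 1} ∩ {f | ‖f‖ ≤ 2 ^ n} ⊆
        gammaSum (fun i => pointwiseBall (D i) (η i)) (2 * n)
  have step (n : ℕ) (C : Finset (lip0 X x₀ ℝ →L[ℝ] ℝ)) : ∃ C', P n C →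
      (∀ μ ∈ C', ‖μ‖ ≤ (2 ^ n)⁻¹) ∧ P (n + 1) (C ∪ C') := by
    by_cases hC : P n C
    · obtain ⟨C', hC', hCC'⟩ := exists_finset_polar_subset_gammaSum_succ hD hη hη0 hC.1 hC.2
      refine ⟨C', fun _ => ⟨fun μ hμ => (hC' μ hμ).2, ?_, fun f ⟨hf, hfn⟩ => hCC' ⟨⟨?_, ?_⟩, hfn⟩⟩⟩
      · simp only [Finset.mem_union]
        rintro μ (hμ | hμ)
        exacts [hC.1 μ hμ, (hC' μ hμ).1]
      · exact fun μ hμ => hf μ (Finset.mem_union_left _ hμ)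
      · exact fun μ hμ => hf μ (Finset.mem_union_right _ hμ)
    · exact ⟨∅, fun h => (hC h).elim⟩
  choose next hnext using step
  obtain ⟨C₀, hC₀⟩ := exists_finset_polar_subset_gammaSum_zero (x₀ := x₀) (D := D) (hη0 0)
  let C : ℕ → Finset (lip0 X x₀ ℝ →L[ℝ] ℝ) := fun n => Nat.rec C₀ (fun k Ck => Ck ∪ next k Ck) n
  have hP (n : ℕ) : P n (C n) := by
    induction n with
    | zero => exact hC₀
    | succ n ih => exact (hnext n (C n) ih).2
  refine ⟨C, monotone_nat_of_le_succ fun n => Finset.subset_union_left, fun n => (hP n).1,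
    fun n μ hμ => ?_, fun n => (hP n).2⟩
  rcases Finset.mem_union.1 (Finset.mem_coe.1 hμ) with h | h
  exacts [Or.inl h, Or.inr (mem_closedBall_zero_iff.2 ((hnext n (C n) (hP n)).1 μ h))]

end DiracSpan

section FreeSpace

variable {X x₀}

instance : CompleteSpace (freeSpace X x₀) :=
  (Submodule.isClosed_topologicalClosure _).completeSpace_coe

/-- Through the generic submodule instances, instance search fails to find the norm on `F(X)'`
and times out on the uniform structure of `F(X)`; these shortcuts are used as local instances. -/
abbrev freeSpace.seminormedAddCommGroup : SeminormedAddCommGroup (freeSpace X x₀) := inferInstance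

abbrev freeSpace.normedSpace : NormedSpace ℝ (freeSpace X x₀) := inferInstance

attribute [local instance] freeSpace.seminormedAddCommGroup freeSpace.normedSpace

lemma coe_deltaF (x : X) : (deltaF X x₀ x : lip0 X x₀ ℝ →L[ℝ] ℝ) = evalCLM X x₀ x := rfl

lemma deltaF_base : deltaF X x₀ x₀ = 0 :=
  Subtype.ext <| ContinuousLinearMap.ext apply_base

lemma lipschitzWith_deltaF : LipschitzWith 1 (deltaF X x₀) :=
  .of_dist_le_mul fun x y => by
    simpa [Subtype.dist_eq, dist_eq_norm, coe_deltaF] using norm_evalCLM_sub_le (x₀ := x₀) x y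

lemma dense_span_deltaF :
    Dense (Submodule.span ℝ (range (deltaF X x₀)) : Set (freeSpace X x₀)) := by
  intro φ
  have himage : Subtype.val '' (Submodule.span ℝ (range (deltaF X x₀)) : Set (freeSpace X x₀)) =
      (diracSpan X x₀ : Set (lip0 X x₀ ℝ →L[ℝ] ℝ)) := by
    rw [← Submodule.coe_subtype, ← Submodule.map_coe, Submodule.map_span, ← range_comp]
    rfl
  rw [closure_subtype, himage, ← Submodule.topologicalClosure_coe]
  exact φ.2

variable (X x₀) in
def ofFreeDual (T : freeSpace X x₀ →L[ℝ] ℝ) : lip0 X x₀ ℝ :=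
  ⟨fun x => T (deltaF X x₀ x), ⟨_, T.lipschitz.comp lipschitzWith_deltaF⟩,
    by simp [deltaF_base]⟩

variable (X x₀) in
def freeDualEquiv : lip0 X x₀ ℝ ≃ₗ[ℝ] (freeSpace X x₀ →L[ℝ] ℝ) :=
  { (freeSpace X x₀).subtypeL.flip.toLinearMap with
    invFun := ofFreeDual X x₀
    left_inv := fun _ => rfl
    right_inv := fun _ => ContinuousLinearMap.ext_on dense_span_deltaF <| by
      rintro _ ⟨x, rfl⟩
      rfl }

lemma freeDualEquiv_apply (f : lip0 X x₀ ℝ) (φ : freeSpace X x₀) :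
    freeDualEquiv X x₀ f φ = φ.1 f := rfl

/-- Approximate `L` by finitely many elements of the span of the `δₓ`, which are pointwise
continuous. -/
lemma exists_nhds_abs_apply_le {L : Set (freeSpace X x₀)} (hL : IsCompact L) {κ c : ℝ}
    (hκ : 0 < κ) (hc : 0 < c) :
    ∃ U : Set (lip0 X x₀ ℝ), (U ∈ @nhds _ (tau0 X x₀ ℝ) 0 ∧ Convex ℝ U ∧ Balanced ℝ U) ∧
      ∀ g ∈ U, ‖g‖ ≤ c → ∀ φ ∈ L, |φ.1 g| ≤ κ := by
  have hLs : Subtype.val '' L ⊆ closure (diracSpan X x₀ : Set (lip0 X x₀ ℝ →L[ℝ] ℝ)) := by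
    rintro _ ⟨φ, -, rfl⟩
    rw [← Submodule.topologicalClosure_coe]
    exact φ.2
  obtain ⟨t, ht⟩ := (hL.image continuous_subtype_val).exists_finset_ball_cover_of_subset_closure
    hLs (by positivity : 0 < κ / (2 * c))
  refine ⟨⋂ ν ∈ t, (ν : lip0 X x₀ ℝ →L[ℝ] ℝ) ⁻¹' Metric.ball 0 (κ / 2), ⟨?_, ?_, ?_⟩, ?_⟩
  · refine @IsOpen.mem_nhds _ (tau0 X x₀ ℝ) _ _ (tau0_le_pointwiseTopology _ ?_) ?_
    · let := pointwiseTopology X x₀ ℝ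
      exact isOpen_biInter_finset fun ν _ =>
        Metric.isOpen_ball.preimage (continuous_pointwise_of_mem_span ν.2)
    · simp [hκ]
  · exact convex_iInter₂ fun ν _ =>
      (convex_ball _ _).linear_preimage (ν : lip0 X x₀ ℝ →L[ℝ] ℝ).toLinearMap
  · exact balanced_iInter₂ fun ν _ =>
      balanced_ball_zero.mulActionHom_preimage (ν : lip0 X x₀ ℝ →L[ℝ] ℝ).toLinearMap.toMulActionHom
  · intro g hg hgc φ hφ
    obtain ⟨ν, hνt, hφν⟩ := mem_iUnion₂.1 (ht (mem_image_of_mem _ hφ))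
    have hνg : |(ν : lip0 X x₀ ℝ →L[ℝ] ℝ) g| < κ / 2 := by
      simpa using mem_iInter₂.1 hg ν hνt
    have hφνg : |(φ.1 - ν) g| ≤ κ / 2 := calc
      |(φ.1 - ν) g| ≤ ‖φ.1 - ν‖ * ‖g‖ := (φ.1 - ν).le_opNorm g
      _ ≤ κ / (2 * c) * c := by
        gcongr
        rw [← dist_eq_norm]; exact (Metric.mem_ball.1 hφν).le
      _ = κ / 2 := by field_simp
    calc |φ.1 g| = |(ν : lip0 X x₀ ℝ →L[ℝ] ℝ) g + (φ.1 - ν) g| := by simp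
      _ ≤ κ := (abs_add_le _ _).trans (by linarith)

lemma exists_isAdmissible_abs_apply_lt {L : Set (freeSpace X x₀)} (hL : IsCompact L) {ε : ℝ}
    (hε : 0 < ε) :
    ∃ U, IsAdmissible U ∧ ∀ g ∈ gammaSet X x₀ ℝ U, ∀ φ ∈ L, |φ.1 g| < ε := by
  choose U hU hUL using fun i : ℕ =>
    exists_nhds_abs_apply_le hL (by positivity : 0 < ε / 4 * (1 / 2) ^ i)
      (by positivity : (0 : ℝ) < 2 ^ i)
  refine ⟨U, hU, fun g hg φ hφ => ?_⟩
  rw [gammaSet_eq_iUnion_gammaSum, mem_iUnion] at hg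
  obtain ⟨m, hm⟩ := hg
  obtain ⟨g, hgi, rfl⟩ := (mem_finsetSum _ _ _).1 hm
  calc |φ.1 (∑ i ∈ Finset.range (m + 1), g i)|
      ≤ ∑ i ∈ Finset.range (m + 1), |φ.1 (g i)| := by
        rw [map_sum]; exact Finset.abs_sum_le_sum_abs _ _
    _ ≤ ∑ i ∈ Finset.range (m + 1), ε / 4 * (1 / 2) ^ i :=
        Finset.sum_le_sum fun i hi => hUL i _ (hgi hi).1 (hgi hi).2 φ hφ
    _ ≤ ε / 4 * 2 := by rw [← Finset.mul_sum]; gcongr; exact sum_geometric_two_le _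
    _ < ε := by linarith

lemma exists_isCompact_polar_subset_gammaSet {U : ℕ → Set (lip0 X x₀ ℝ)} (hU : IsAdmissible U) :
    ∃ L : Set (freeSpace X x₀), IsCompact L ∧ Convex ℝ L ∧ Balanced ℝ L ∧
      ∀ g, (∀ φ ∈ L, |φ.1 g| ≤ 1) → g ∈ gammaSet X x₀ ℝ U := by
  obtain ⟨D, η, hD, hη, hη0, hDU⟩ := exists_pointwiseBall_seq hU
  obtain ⟨C, hCmono, hCspan, hCsucc, hCS⟩ :=
    exists_seq_finset_polar_subset_gammaSum (x₀ := x₀) hD hη hη0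
  set K : Set (lip0 X x₀ ℝ →L[ℝ] ℝ) := ⋃ n, (C n : Set _)
  have hK : TotallyBounded K :=
    totallyBounded_iUnion_of_subset_union_closedBall (fun n => (C n).finite_toSet)
      (fun m n hmn => Finset.coe_subset.2 (hCmono hmn))
      (fun m n hmn => inv_anti₀ (by positivity) (pow_le_pow_right₀ one_le_two hmn))
      (tendsto_inv_atTop_zero.comp (tendsto_pow_atTop_atTop_of_one_lt one_lt_two)) hCsucc
  have hKF : K ⊆ freeSpace X x₀ := iUnion_subset fun n μ hμ =>
    Submodule.le_topologicalClosure _ (hCspan n μ hμ)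
  refine ⟨closedAbsConvexHull ℝ (Subtype.val ⁻¹' K),
    isCompact_closedAbsConvexHull_of_totallyBounded
      (totallyBounded_preimage isUniformEmbedding_subtype_val.isUniformInducing hK),
    absConvex_convexClosedHull.2, absConvex_convexClosedHull.1, fun g hg => ?_⟩
  obtain ⟨n, hn⟩ := pow_unbounded_of_one_lt ‖g‖ (one_lt_two : (1 : ℝ) < 2)
  have hgS := hCS n ⟨fun μ hμ => hg ⟨μ, hKF (mem_iUnion_of_mem n hμ)⟩
    (subset_closedAbsConvexHull (mem_iUnion_of_mem n hμ)), hn.le⟩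
  rw [gammaSet_eq_iUnion_gammaSum]
  exact mem_iUnion_of_mem (2 * n) <|
    finsetSum_subset_finsetSum _ _ _ (fun i _ => subset_inter (hDU i) inter_subset_right) hgS

end FreeSpace

lemma hasBasis_nhds_dualcTop {G : Type*} [NormedAddCommGroup G] [NormedSpace ℝ G] [CompleteSpace G]
    (T : G →L[ℝ] ℝ) :
    (@nhds _ (dualcTop G) T).HasBasis
      (fun p : Set G × ℝ => (IsCompact p.1 ∧ Convex ℝ p.1 ∧ Balanced ℝ p.1) ∧ 0 < p.2)
      fun p => {T' | ∀ φ ∈ p.1, dist (T' φ) (T φ) < p.2} := by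
  rw [dualcTop, nhds_induced]
  refine (UniformOnFun.hasBasis_nhds_of_basis G ℝ _ _ ?_ ?_ Metric.uniformity_basis_dist).comap _
  · exact ⟨∅, isCompact_empty, convex_empty, balanced_empty⟩
  · rintro L₁ ⟨hL₁, -⟩ L₂ ⟨hL₂, -⟩
    refine ⟨closedAbsConvexHull ℝ (L₁ ∪ L₂), ⟨?_, absConvex_convexClosedHull.2,
      absConvex_convexClosedHull.1⟩, subset_union_left.trans subset_closedAbsConvexHull,
      subset_union_right.trans subset_closedAbsConvexHull⟩
    exact isCompact_closedAbsConvexHull_of_totallyBounded (hL₁.union hL₂).totallyBounded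

section Continuity

variable {X x₀}

lemma continuous_freeDualEquiv :
    Continuous[tauGamma X x₀ ℝ, dualcTop (freeSpace X x₀)] (freeDualEquiv X x₀) := by
  refine @Continuous.mk _ _ (tauGamma X x₀ ℝ) (dualcTop (freeSpace X x₀)) _ fun O hO =>
    isOpen_tauGamma_iff.2 fun f hf => ?_
  obtain ⟨⟨L, ε⟩, ⟨hL, hε⟩, hLO⟩ := (hasBasis_nhds_dualcTop _).mem_iff.1
    (@IsOpen.mem_nhds _ (dualcTop (freeSpace X x₀)) _ _ hO hf)
  obtain ⟨U, hU, hUL⟩ := exists_isAdmissible_abs_apply_lt hL.1 hε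
  refine ⟨U, hU, ?_⟩
  rintro _ ⟨g, hg, rfl⟩
  refine hLO fun φ hφ => ?_
  simpa [freeDualEquiv_apply, Real.dist_eq] using hUL g hg φ hφ

lemma continuous_freeDualEquiv_symm :
    Continuous[dualcTop (freeSpace X x₀), tauGamma X x₀ ℝ] (freeDualEquiv X x₀).symm := by
  refine @Continuous.mk _ _ (dualcTop (freeSpace X x₀)) (tauGamma X x₀ ℝ) _ fun O hO =>
    (@isOpen_iff_mem_nhds _ (dualcTop (freeSpace X x₀)) _).2 fun T hT => ?_
  obtain ⟨U, hU, hUO⟩ := isOpen_tauGamma_iff.1 hO _ hT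
  obtain ⟨L, hLc, hLconv, hLbal, hLU⟩ := exists_isCompact_polar_subset_gammaSet hU
  refine (hasBasis_nhds_dualcTop T).mem_iff.2 ⟨(L, 1), ⟨⟨hLc, hLconv, hLbal⟩, one_pos⟩,
    fun T' hT' => ?_⟩
  have hsymm (S : freeSpace X x₀ →L[ℝ] ℝ) (φ : freeSpace X x₀) :
      φ.1 ((freeDualEquiv X x₀).symm S) = S φ := by
    rw [← freeDualEquiv_apply, LinearEquiv.apply_symm_apply]
  refine hUO ⟨(freeDualEquiv X x₀).symm T' - (freeDualEquiv X x₀).symm T,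
    hLU _ fun φ hφ => ?_, add_sub_cancel _ _⟩
  rw [map_sub, hsymm, hsymm, ← Real.dist_eq]
  exact (hT' φ hφ).le

end Continuity

/-- The evaluation map `f ↦ T_f`, `T_f(φ) = φ(f)`, is a topological
isomorphism from `(Lip₀(X), τ_γ)` onto `F(X)'_c`, the dual of the Banach space `F(X)`
with the topology of uniform convergence on convex balanced compact subsets of `F(X)`. -/
theorem stmt8 (X : Type*) [MetricSpace X] (x₀ : X) :
    ∃ e : lip0 X x₀ ℝ ≃ₗ[ℝ] ((freeSpace X x₀) →L[ℝ] ℝ),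
      (∀ (f : lip0 X x₀ ℝ) (φ : freeSpace X x₀), e f φ = φ.1 f) ∧
      @Continuous _ _ (tauGamma X x₀ ℝ) (dualcTop ↥(freeSpace X x₀)) e ∧
      @Continuous _ _ (dualcTop ↥(freeSpace X x₀)) (tauGamma X x₀ ℝ) e.symm :=
  ⟨freeDualEquiv X x₀, freeDualEquiv_apply, continuous_freeDualEquiv,
    continuous_freeDualEquiv_symm⟩

end LipApprox
end
end

section
/- Let X be a pointed metric space and let F be a Banach space. The map K : Lip₀(X) ⊗ F → Lip₀^F(X,F) defined by K(∑_{j=1}^m g_j ⊗ u_j) = ∑_{j=1}^m g_j·u_j is a well-defined linear bijection; hence the tensor product Lip₀(X) ⊗ F is linearly isomorphic to the space Lip₀^F(X,F) of Lipschitz finite-rank operators from X to F. -/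
open Filter Topology Set Pointwise

set_option linter.unusedSectionVars false
set_option linter.unusedVariables false

noncomputable section

namespace LipApprox

variable (X : Type*) [MetricSpace X] (x₀ : X)
variable (F : Type*) [NormedAddCommGroup F] [NormedSpace ℝ F]

variable {X x₀ F}

variable (X x₀ F)

/-- The elementary tensor `g · u : x ↦ g(x) u`, an element of `Lip₀(X, F)` for
`g ∈ Lip₀(X)` and `u ∈ F`. -/
def smulFun (X : Type*) [MetricSpace X] (x₀ : X)
    (F : Type*) [NormedAddCommGroup F] [NormedSpace ℝ F]
    (g : lip0 X x₀ ℝ) (u : F) : lip0 X x₀ F :=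
  ⟨fun x => toFun' g x • u,
    ⟨⟨(exists_lip g).choose * ‖u‖₊, by
        apply LipschitzWith.of_dist_le_mul
        intro x y
        rw [dist_eq_norm, ← sub_smul, norm_smul]
        have h := (exists_lip g).choose_spec.dist_le_mul x y
        rw [Real.dist_eq] at h
        calc ‖toFun' g x - toFun' g y‖ * ‖u‖
            = |toFun' g x - toFun' g y| * ‖u‖ := by rw [Real.norm_eq_abs]
          _ ≤ ((exists_lip g).choose * dist x y) * ‖u‖ := by
              apply mul_le_mul_of_nonneg_right h (norm_nonneg u)
          _ = ↑((exists_lip g).choose * ‖u‖₊) * dist x y := by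
              push_cast; ring⟩,
      by simp [apply_base g]⟩⟩

/-- The canonical linear map `Lip₀(X) ⊗ F → Lip₀(X, F)` determined by
`g ⊗ u ↦ g · u`. -/
def tensorToLip (X : Type*) [MetricSpace X] (x₀ : X)
    (F : Type*) [NormedAddCommGroup F] [NormedSpace ℝ F] :
    TensorProduct ℝ (lip0 X x₀ ℝ) F →ₗ[ℝ] lip0 X x₀ F :=
  TensorProduct.lift <| LinearMap.mk₂ ℝ (smulFun X x₀ F)
    (fun g₁ g₂ u => Subtype.ext (funext fun x => by
      show (toFun' (g₁ + g₂) x) • u = toFun' g₁ x • u + toFun' g₂ x • u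
      rw [toFun'_add, Pi.add_apply, add_smul]))
    (fun c g u => Subtype.ext (funext fun x => by
      show (toFun' (c • g) x) • u = c • (toFun' g x • u)
      rw [toFun'_smul, Pi.smul_apply, smul_assoc]))
    (fun g u₁ u₂ => Subtype.ext (funext fun x => by
      show toFun' g x • (u₁ + u₂) = toFun' g x • u₁ + toFun' g x • u₂
      rw [smul_add]))
    (fun c g u => Subtype.ext (funext fun x => by
      show toFun' g x • (c • u) = c • (toFun' g x • u)
      rw [smul_comm]))

/-! `K` factors as `Lip₀(X) ⊗ F → (X → ℝ) ⊗ F → (X → F)`. The first map is injective because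
`F`, a vector space, is flat; the second because expanding in a basis `(bᵢ)` of `F`, the value
`∑ gᵢ(x) bᵢ` at `x` vanishes only if every coefficient `gᵢ(x)` does. An element `∑ gⱼ ⊗ uⱼ`
is sent to a map with values in the span of the `uⱼ`. Conversely, if `f` takes values in a
finite-dimensional `V`, extend the coordinate functionals of a basis `(bᵢ)` of `V` to continuous
functionals `Lᵢ` on `F` (Hahn–Banach); then `Lᵢ ∘ f ∈ Lip₀(X)` and `f = K(∑ (Lᵢ ∘ f) ⊗ bᵢ)`. -/

section

open TensorProduct

theorem _root_.TensorProduct.piScalarRightHom_injective {R N ι : Type*} [CommRing R]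
    [AddCommGroup N] [Module R N] [Module.Free R N] :
    Function.Injective (piScalarRightHom R R N ι) := by
  classical
  let b := Module.Free.chooseBasis R N
  rw [injective_iff_map_eq_zero]
  intro t ht
  obtain ⟨c, rfl⟩ := eq_repr_basis_left b t
  suffices c = 0 by simp [this]
  ext i j
  have hj : Finsupp.linearCombination R b (c.mapRange (· j) rfl) = 0 := by
    rw [Finsupp.linearCombination_apply, Finsupp.sum_mapRange_index (by simp)]
    simpa [Finsupp.sum] using congr_fun ht j
  simpa using DFunLike.congr_fun (linearIndependent_iff.mp b.linearIndependent _ hj) i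

theorem _root_.TensorProduct.finiteDimensional_span_range_piScalarRightHom {K N ι : Type*}
    [Field K] [AddCommGroup N] [Module K N] (t : N ⊗[K] (ι → K)) :
    FiniteDimensional K (Submodule.span K (Set.range (piScalarRightHom K K N ι t))) := by
  classical
  obtain ⟨S, rfl⟩ := exists_finset t
  refine Submodule.finiteDimensional_of_le (S₂ := Submodule.span K (S.image Prod.fst : Set N)) ?_
  rw [Submodule.span_le]
  rintro _ ⟨j, rfl⟩
  simp only [map_sum, piScalarRightHom_tmul, Finset.sum_apply]
  exact Submodule.sum_mem _ fun p hp =>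
    Submodule.smul_mem _ _ (Submodule.subset_span (Finset.mem_image_of_mem _ hp))

theorem _root_.Submodule.exists_sum_clm_smul_eq_of_finiteDimensional {𝕜 F : Type*} [RCLike 𝕜]
    [NormedAddCommGroup F] [NormedSpace 𝕜 F] (V : Submodule 𝕜 F) [FiniteDimensional 𝕜 V] :
    ∃ (n : ℕ) (L : Fin n → StrongDual 𝕜 F) (u : Fin n → F), ∀ v ∈ V, ∑ i, L i v • u i = v := by
  obtain ⟨P, hP⟩ := Submodule.ClosedComplemented.of_finiteDimensional V
  let b := Module.finBasis 𝕜 V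
  refine ⟨_, fun i => (LinearMap.toContinuousLinearMap (b.coord i)).comp P, fun i => b i,
    fun v hv => ?_⟩
  have hPv : P v = ⟨v, hv⟩ := hP ⟨v, hv⟩
  simp only [ContinuousLinearMap.coe_comp, Function.comp_apply,
    LinearMap.coe_toContinuousLinearMap', Module.Basis.coord_apply, hPv,
    ← Submodule.coe_smul_of_tower, ← Submodule.coe_sum, b.sum_repr]

variable {X x₀ F}
variable {G : Type*} [NormedAddCommGroup G] [NormedSpace ℝ G]

def lip0Comp (L : F →L[ℝ] G) (f : lip0 X x₀ F) : lip0 X x₀ G :=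
  ⟨L ∘ toFun' f,
    ⟨⟨‖L‖₊ * (exists_lip f).choose, L.lipschitz.comp (exists_lip f).choose_spec⟩,
      by simp [apply_base f]⟩⟩

theorem toFun'_lip0Comp (L : F →L[ℝ] G) (f : lip0 X x₀ F) :
    toFun' (lip0Comp L f) = L ∘ toFun' f := rfl

variable (X x₀ F) in
def toFunₗ : lip0 X x₀ F →ₗ[ℝ] X → F := (lip0Submodule X x₀ F).subtype

theorem toFunₗ_apply (f : lip0 X x₀ F) : toFunₗ X x₀ F f = toFun' f := rfl

theorem toFunₗ_injective : Function.Injective (toFunₗ X x₀ F) := Subtype.val_injective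

theorem toFunₗ_comp_tensorToLip :
    toFunₗ X x₀ F ∘ₗ tensorToLip X x₀ F =
      piScalarRightHom ℝ ℝ F X ∘ₗ (TensorProduct.comm ℝ _ F).toLinearMap ∘ₗ
        (toFunₗ X x₀ ℝ).rTensor F :=
  TensorProduct.ext' fun _ _ => rfl

theorem tensorToLip_tmul (g : lip0 X x₀ ℝ) (u : F) :
    tensorToLip X x₀ F (g ⊗ₜ u) = smulFun X x₀ F g u := rfl

theorem toFun'_smulFun (g : lip0 X x₀ ℝ) (u : F) :
    toFun' (smulFun X x₀ F g u) = fun x => toFun' g x • u := rfl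

theorem tensorToLip_injective : Function.Injective (tensorToLip X x₀ F) := by
  refine Function.Injective.of_comp (f := toFunₗ X x₀ F) ?_
  rw [← LinearMap.coe_comp, toFunₗ_comp_tensorToLip]
  exact piScalarRightHom_injective.comp <| (TensorProduct.comm _ _ _).injective.comp <|
    Module.Flat.rTensor_preserves_injective_linearMap _ toFunₗ_injective

theorem finiteDimensional_span_range_tensorToLip (t : lip0 X x₀ ℝ ⊗[ℝ] F) :
    FiniteDimensional ℝ (Submodule.span ℝ (Set.range (toFun' (tensorToLip X x₀ F t)))) := by
  rw [← toFunₗ_apply, ← LinearMap.comp_apply, toFunₗ_comp_tensorToLip]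
  exact finiteDimensional_span_range_piScalarRightHom _

theorem mem_range_tensorToLip_of_finiteDimensional (f : lip0 X x₀ F)
    (hf : FiniteDimensional ℝ (Submodule.span ℝ (Set.range (toFun' f)))) :
    f ∈ Set.range (tensorToLip X x₀ F) := by
  obtain ⟨n, L, u, hLu⟩ :=
    (Submodule.span ℝ (Set.range (toFun' f))).exists_sum_clm_smul_eq_of_finiteDimensional
  refine ⟨∑ i, lip0Comp (L i) f ⊗ₜ u i, toFunₗ_injective (funext fun x => ?_)⟩
  simp only [map_sum, tensorToLip_tmul, toFunₗ_apply, toFun'_smulFun, toFun'_lip0Comp,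
    Finset.sum_apply, Function.comp_apply]
  exact hLu _ (Submodule.subset_span (Set.mem_range_self x))

theorem range_tensorToLip :
    Set.range (tensorToLip X x₀ F) =
      {f | FiniteDimensional ℝ (Submodule.span ℝ (Set.range (toFun' f)))} :=
  Set.Subset.antisymm (Set.range_subset_iff.2 finiteDimensional_span_range_tensorToLip)
    mem_range_tensorToLip_of_finiteDimensional

end

theorem stmt16_general (X : Type*) [MetricSpace X] (x₀ : X)
    (F : Type*) [NormedAddCommGroup F] [NormedSpace ℝ F] :
    (∀ (g : lip0 X x₀ ℝ) (u : F),
      tensorToLip X x₀ F (g ⊗ₜ[ℝ] u) = smulFun X x₀ F g u) ∧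
    Function.Injective (tensorToLip X x₀ F) ∧
    Set.range (tensorToLip X x₀ F) =
      {f : lip0 X x₀ F |
        FiniteDimensional ℝ (Submodule.span ℝ (Set.range (toFun' f)))} :=
  ⟨tensorToLip_tmul, tensorToLip_injective, range_tensorToLip⟩

/-- The map `K : Lip₀(X) ⊗ F → Lip₀ᶠ(X, F)`, determined by
`K(∑ gⱼ ⊗ uⱼ) = ∑ gⱼ · uⱼ`, is a well-defined linear bijection from the tensor product
`Lip₀(X) ⊗ F` onto the space of Lipschitz finite-rank operators from `X` to `F`
(those `f ∈ Lip₀(X, F)` whose range spans a finite-dimensional subspace of `F`). -/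
theorem stmt16 (X : Type*) [MetricSpace X] (x₀ : X)
    (F : Type*) [NormedAddCommGroup F] [NormedSpace ℝ F] [CompleteSpace F] :
    (∀ (g : lip0 X x₀ ℝ) (u : F),
      tensorToLip X x₀ F (g ⊗ₜ[ℝ] u) = smulFun X x₀ F g u) ∧
    Function.Injective (tensorToLip X x₀ F) ∧
    Set.range (tensorToLip X x₀ F) =
      {f : lip0 X x₀ F |
        FiniteDimensional ℝ (Submodule.span ℝ (Set.range (toFun' f)))} :=
  stmt16_general X x₀ F

end LipApprox
end
end
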